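/- For a smooth solution of the hyperboloidal equation on [−1,1], the Bondi energy 𝓔(τ) = ∫_{−1}^1 ρ dx satisfies d𝓔/dτ = −(∂τW(τ,−1))² − (∂τW(τ,1))²; in particular 𝓔 is nonincreasing. -/

import Mathlib

/-- `∂τ` of a function of `(τ,x)`. -/
noncomputable def pdTau (W : ℝ → ℝ → ℝ) (τ x : ℝ) : ℝ :=
  deriv (fun s => W s x) τ

/-- `∂x` of a function of `(τ,x)`. -/
noncomputable def pdX (W : ℝ → ℝ → ℝ) (τ x : ℝ) : ℝ :=
  deriv (fun y => W τ y) x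

/-- Energy density `ρ` for the hyperboloidal Yang-Mills equation. -/
noncomputable def energyDensity (ℓ : ℝ) (W : ℝ → ℝ → ℝ) (τ x : ℝ) : ℝ :=
  (1 / 2) * ((pdTau W τ x) ^ 2 + (1 - x ^ 2) * (pdX W τ x) ^ 2
    + ℓ * (ℓ + 1) / 2 * (1 - (W τ x) ^ 2) ^ 2)

/-- Bondi-type energy `𝓔(τ) = ∫_{−1}^1 ρ dx`. -/
noncomputable def bondiEnergy (ℓ : ℝ) (W : ℝ → ℝ → ℝ) (τ : ℝ) : ℝ :=
  ∫ x in (-1 : ℝ)..1, energyDensity ℓ W τ x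
/-!
Differentiating under the integral sign, `𝓔' = ∫ ∂τρ`. Along solutions the equation turns
`∂τρ` into `-∂x f` for the flux `f = x (∂τW)² - (1 - x²) ∂τW ∂xW`, so `𝓔' = f(-1) - f(1)`.
The weight `1 - x²` vanishes at `x = ±1`, where only `f(±1) = ±(∂τW)²` survives.
-/

open Function Set intervalIntegral

section PartialDerivatives

variable {W : ℝ → ℝ → ℝ} {τ x : ℝ}

theorem hasDerivAt_fderiv_apply_left (hW : DifferentiableAt ℝ (uncurry W) (τ, x)) :
    HasDerivAt (fun s => W s x) (fderiv ℝ (uncurry W) (τ, x) (1, 0)) τ :=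
  hW.hasFDerivAt.comp_hasDerivAt (f := fun s => (s, x)) τ
    ((hasDerivAt_id' τ).prodMk (hasDerivAt_const τ x))

theorem hasDerivAt_fderiv_apply_right (hW : DifferentiableAt ℝ (uncurry W) (τ, x)) :
    HasDerivAt (fun y => W τ y) (fderiv ℝ (uncurry W) (τ, x) (0, 1)) x :=
  hW.hasFDerivAt.comp_hasDerivAt x ((hasDerivAt_const x τ).prodMk (hasDerivAt_id x))

theorem pdTau_eq_fderiv (hW : DifferentiableAt ℝ (uncurry W) (τ, x)) :
    pdTau W τ x = fderiv ℝ (uncurry W) (τ, x) (1, 0) :=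
  (hasDerivAt_fderiv_apply_left hW).deriv

theorem pdX_eq_fderiv (hW : DifferentiableAt ℝ (uncurry W) (τ, x)) :
    pdX W τ x = fderiv ℝ (uncurry W) (τ, x) (0, 1) :=
  (hasDerivAt_fderiv_apply_right hW).deriv

theorem hasDerivAt_pdTau (hW : DifferentiableAt ℝ (uncurry W) (τ, x)) :
    HasDerivAt (fun s => W s x) (pdTau W τ x) τ :=
  (hasDerivAt_fderiv_apply_left hW).differentiableAt.hasDerivAt

theorem hasDerivAt_pdX (hW : DifferentiableAt ℝ (uncurry W) (τ, x)) :
    HasDerivAt (fun y => W τ y) (pdX W τ x) x :=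
  (hasDerivAt_fderiv_apply_right hW).differentiableAt.hasDerivAt

theorem uncurry_pdTau (hW : Differentiable ℝ (uncurry W)) :
    uncurry (pdTau W) = fun p => fderiv ℝ (uncurry W) p (1, 0) :=
  funext fun p => pdTau_eq_fderiv (hW p)

theorem uncurry_pdX (hW : Differentiable ℝ (uncurry W)) :
    uncurry (pdX W) = fun p => fderiv ℝ (uncurry W) p (0, 1) :=
  funext fun p => pdX_eq_fderiv (hW p)

theorem ContDiff.uncurry_pdTau {m n : WithTop ℕ∞} (hW : ContDiff ℝ n (uncurry W))
    (hmn : m + 1 ≤ n) : ContDiff ℝ m (uncurry (pdTau W)) := by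
  have hn : n ≠ 0 := ne_bot_of_le_ne_bot one_ne_zero (le_add_self.trans hmn)
  rw [_root_.uncurry_pdTau (hW.differentiable hn)]
  exact (hW.fderiv_right hmn).clm_apply contDiff_const

theorem ContDiff.uncurry_pdX {m n : WithTop ℕ∞} (hW : ContDiff ℝ n (uncurry W))
    (hmn : m + 1 ≤ n) : ContDiff ℝ m (uncurry (pdX W)) := by
  have hn : n ≠ 0 := ne_bot_of_le_ne_bot one_ne_zero (le_add_self.trans hmn)
  rw [_root_.uncurry_pdX (hW.differentiable hn)]
  exact (hW.fderiv_right hmn).clm_apply contDiff_const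

theorem pdX_pdTau_eq_pdTau_pdX (hW : ContDiff ℝ 2 (uncurry W)) :
    pdX (pdTau W) τ x = pdTau (pdX W) τ x := by
  have hd : Differentiable ℝ (fderiv ℝ (uncurry W)) :=
    (hW.fderiv_right (m := 1) le_rfl).differentiable one_ne_zero
  have hfderiv (v : ℝ × ℝ) : fderiv ℝ (fun p => fderiv ℝ (uncurry W) p v) (τ, x)
      = (fderiv ℝ (fderiv ℝ (uncurry W)) (τ, x)).flip v := by
    rw [fderiv_clm_apply (hd _) (differentiableAt_const v)]
    simp
  rw [pdX_eq_fderiv ((hW.uncurry_pdTau le_rfl).differentiable one_ne_zero _),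
    pdTau_eq_fderiv ((hW.uncurry_pdX le_rfl).differentiable one_ne_zero _),
    _root_.uncurry_pdTau (hW.differentiable two_ne_zero),
    _root_.uncurry_pdX (hW.differentiable two_ne_zero), hfderiv, hfderiv]
  exact (hW.contDiffAt.isSymmSndFDerivAt (by simp)).eq _ _

end PartialDerivatives

theorem hasDerivAt_intervalIntegral_of_continuous {E : Type*} [NormedAddCommGroup E]
    [NormedSpace ℝ E] {F F' : ℝ → ℝ → E} {a b t₀ : ℝ} (hF : Continuous (uncurry F))
    (hF' : Continuous (uncurry F')) (hderiv : ∀ t x, HasDerivAt (F · x) (F' t x) t) :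
    HasDerivAt (fun t => ∫ x in a..b, F t x) (∫ x in a..b, F' t₀ x) t₀ := by
  have hF_slice (t : ℝ) : Continuous (F t) := hF.comp (Continuous.prodMk_right t)
  have hF'_slice (t : ℝ) : Continuous (F' t) := hF'.comp (Continuous.prodMk_right t)
  obtain ⟨M, hM⟩ := ((isCompact_closedBall t₀ 1).prod isCompact_uIcc).exists_bound_of_continuousOn
    hF'.continuousOn
  have hbound : ∀ᵐ x, x ∈ uIoc a b → ∀ t ∈ Metric.ball t₀ 1, ‖F' t x‖ ≤ M :=
    .of_forall fun x hx t ht => hM (t, x) ⟨Metric.ball_subset_closedBall ht, uIoc_subset_uIcc hx⟩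
  exact (hasDerivAt_integral_of_dominated_loc_of_deriv_le (Metric.ball_mem_nhds t₀ one_pos)
    (.of_forall fun t => (hF_slice t).aestronglyMeasurable) ((hF_slice t₀).intervalIntegrable a b)
    (hF'_slice t₀).aestronglyMeasurable hbound intervalIntegrable_const
    (.of_forall fun x _ t _ => hderiv t x)).2

noncomputable def energyFlux (W : ℝ → ℝ → ℝ) (τ x : ℝ) : ℝ :=
  x * pdTau W τ x ^ 2 - (1 - x ^ 2) * pdTau W τ x * pdX W τ x

noncomputable def energyDensityRate (ℓ : ℝ) (W : ℝ → ℝ → ℝ) (τ x : ℝ) : ℝ :=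
  pdTau W τ x * pdTau (pdTau W) τ x + (1 - x ^ 2) * pdX W τ x * pdX (pdTau W) τ x
    - ℓ * (ℓ + 1) * W τ x * (1 - W τ x ^ 2) * pdTau W τ x

section Energy

variable {ℓ : ℝ} {W : ℝ → ℝ → ℝ}

theorem continuous_uncurry_energyDensity (hW : ContDiff ℝ 1 (uncurry W)) :
    Continuous (uncurry (energyDensity ℓ W)) := by
  have hτ : Continuous fun p : ℝ × ℝ => pdTau W p.1 p.2 :=
    (hW.uncurry_pdTau (m := 0) (by simp)).continuous
  have hx : Continuous fun p : ℝ × ℝ => pdX W p.1 p.2 :=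
    (hW.uncurry_pdX (m := 0) (by simp)).continuous
  have hW₀ : Continuous fun p : ℝ × ℝ => W p.1 p.2 := hW.continuous
  show Continuous fun p : ℝ × ℝ => energyDensity ℓ W p.1 p.2
  unfold energyDensity
  fun_prop

theorem continuous_uncurry_energyDensityRate (hW : ContDiff ℝ 2 (uncurry W)) :
    Continuous (uncurry (energyDensityRate ℓ W)) := by
  have hW₁ : ContDiff ℝ 1 (uncurry (pdTau W)) := hW.uncurry_pdTau le_rfl
  have hτ : Continuous fun p : ℝ × ℝ => pdTau W p.1 p.2 := hW₁.continuous
  have hx : Continuous fun p : ℝ × ℝ => pdX W p.1 p.2 :=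
    (hW.uncurry_pdX (m := 0) (by simp)).continuous
  have hττ : Continuous fun p : ℝ × ℝ => pdTau (pdTau W) p.1 p.2 :=
    (hW₁.uncurry_pdTau (m := 0) (by simp)).continuous
  have hxτ : Continuous fun p : ℝ × ℝ => pdX (pdTau W) p.1 p.2 :=
    (hW₁.uncurry_pdX (m := 0) (by simp)).continuous
  have hW₀ : Continuous fun p : ℝ × ℝ => W p.1 p.2 := hW.continuous
  show Continuous fun p : ℝ × ℝ => energyDensityRate ℓ W p.1 p.2
  unfold energyDensityRate
  fun_prop

theorem hasDerivAt_energyDensity (hW : ContDiff ℝ 2 (uncurry W)) (τ x : ℝ) :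
    HasDerivAt (fun s => energyDensity ℓ W s x) (energyDensityRate ℓ W τ x) τ := by
  have hW' := hasDerivAt_pdTau ((hW.differentiable two_ne_zero) (τ, x))
  have hτ := hasDerivAt_pdTau (((hW.uncurry_pdTau le_rfl).differentiable one_ne_zero) (τ, x))
  have hx := hasDerivAt_pdTau (((hW.uncurry_pdX le_rfl).differentiable one_ne_zero) (τ, x))
  rw [← pdX_pdTau_eq_pdTau_pdX hW] at hx
  refine ((((hτ.pow 2).add ((hx.pow 2).const_mul (1 - x ^ 2))).add
    ((((hasDerivAt_const τ 1).sub (hW'.pow 2)).pow 2).const_mul (ℓ * (ℓ + 1) / 2))).const_mul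
    (1 / 2 : ℝ)).congr_deriv ?_
  simp only [energyDensityRate, Pi.pow_apply, Pi.sub_apply]
  ring

theorem hasDerivAt_energyFlux (hW : ContDiff ℝ 2 (uncurry W)) {τ x : ℝ}
    (hPDE : pdTau (pdTau W) τ x + 2 * x * pdX (pdTau W) τ x + pdTau W τ x
        = pdX (fun s y => (1 - y ^ 2) * pdX W s y) τ x
          + ℓ * (ℓ + 1) * W τ x * (1 - (W τ x) ^ 2)) :
    HasDerivAt (energyFlux W τ) (-energyDensityRate ℓ W τ x) x := by
  have hτ := hasDerivAt_pdX (((hW.uncurry_pdTau le_rfl).differentiable one_ne_zero) (τ, x))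
  have hx := hasDerivAt_pdX (((hW.uncurry_pdX le_rfl).differentiable one_ne_zero) (τ, x))
  have hweight : HasDerivAt (fun y : ℝ => 1 - y ^ 2) (-(2 * x)) x :=
    ((hasDerivAt_const x (1 : ℝ)).sub (hasDerivAt_pow 2 x)).congr_deriv (by ring)
  have hdiv : pdX (fun s y => (1 - y ^ 2) * pdX W s y) τ x
      = -(2 * x) * pdX W τ x + (1 - x ^ 2) * pdX (pdX W) τ x :=
    (hweight.mul hx).deriv
  refine (((hasDerivAt_id' x).mul (hτ.pow 2)).sub ((hweight.mul hτ).mul hx)).congr_deriv ?_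
  rw [hdiv] at hPDE
  simp only [energyDensityRate, Pi.pow_apply, Pi.mul_apply]
  linear_combination pdTau W τ x * hPDE

theorem integral_energyDensityRate (hW : ContDiff ℝ 2 (uncurry W)) {τ : ℝ}
    (hPDE : ∀ x ∈ Icc (-1 : ℝ) 1,
      pdTau (pdTau W) τ x + 2 * x * pdX (pdTau W) τ x + pdTau W τ x
        = pdX (fun s y => (1 - y ^ 2) * pdX W s y) τ x
          + ℓ * (ℓ + 1) * W τ x * (1 - (W τ x) ^ 2)) :
    ∫ x in (-1 : ℝ)..1, energyDensityRate ℓ W τ x = energyFlux W τ (-1) - energyFlux W τ 1 := by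
  have hrate : Continuous (energyDensityRate ℓ W τ) :=
    (continuous_uncurry_energyDensityRate hW).comp (Continuous.prodMk_right τ)
  have hflux : ∀ x ∈ uIcc (-1 : ℝ) 1, HasDerivAt (energyFlux W τ) (-energyDensityRate ℓ W τ x) x :=
    fun x hx => hasDerivAt_energyFlux hW (hPDE x (uIcc_of_le (by norm_num : (-1 : ℝ) ≤ 1) ▸ hx))
  have hftc := integral_eq_sub_of_hasDerivAt hflux (hrate.neg.intervalIntegrable _ _)
  rw [integral_neg] at hftc
  linarith

end Energy

theorem energy_balance_general (ℓ : ℝ) (W : ℝ → ℝ → ℝ)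
    (hW : ContDiff ℝ 2 (Function.uncurry W))
    (hPDE : ∀ τ : ℝ, ∀ x ∈ Set.Icc (-1 : ℝ) 1,
      pdTau (pdTau W) τ x + 2 * x * pdX (pdTau W) τ x + pdTau W τ x
        = pdX (fun s y => (1 - y ^ 2) * pdX W s y) τ x
          + ℓ * (ℓ + 1) * W τ x * (1 - (W τ x) ^ 2)) :
    (∀ τ : ℝ, HasDerivAt (bondiEnergy ℓ W)
        (-(pdTau W τ (-1)) ^ 2 - (pdTau W τ 1) ^ 2) τ)
      ∧ Antitone (bondiEnergy ℓ W) := by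
  have hbalance (τ : ℝ) : HasDerivAt (bondiEnergy ℓ W)
      (-(pdTau W τ (-1)) ^ 2 - (pdTau W τ 1) ^ 2) τ := by
    have hderiv : HasDerivAt (bondiEnergy ℓ W)
        (∫ x in (-1 : ℝ)..1, energyDensityRate ℓ W τ x) τ :=
      hasDerivAt_intervalIntegral_of_continuous
        (continuous_uncurry_energyDensity (hW.of_le one_le_two))
        (continuous_uncurry_energyDensityRate hW) (hasDerivAt_energyDensity hW)
    have hboundary : energyFlux W τ (-1) - energyFlux W τ 1
        = -(pdTau W τ (-1)) ^ 2 - (pdTau W τ 1) ^ 2 := by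
      norm_num [energyFlux]
    rwa [integral_energyDensityRate hW (hPDE τ), hboundary] at hderiv
  refine ⟨hbalance, antitone_of_deriv_nonpos (fun τ => (hbalance τ).differentiableAt)
    fun τ => ?_⟩
  rw [(hbalance τ).deriv]
  linarith [sq_nonneg (pdTau W τ (-1)), sq_nonneg (pdTau W τ 1)]

/-- Energy balance: for a smooth solution of the hyperboloidal Yang-Mills
equation, `d𝓔/dτ = −(∂τW(τ,−1))² − (∂τW(τ,1))²`; in particular `𝓔` is
nonincreasing. -/
theorem energy_balance (ℓ : ℝ) (hℓ : 0 < ℓ) (W : ℝ → ℝ → ℝ)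
    (hW : ContDiff ℝ 2 (Function.uncurry W))
    (hPDE : ∀ τ : ℝ, ∀ x ∈ Set.Icc (-1 : ℝ) 1,
      pdTau (pdTau W) τ x + 2 * x * pdX (pdTau W) τ x + pdTau W τ x
        = pdX (fun s y => (1 - y ^ 2) * pdX W s y) τ x
          + ℓ * (ℓ + 1) * W τ x * (1 - (W τ x) ^ 2)) :
    (∀ τ : ℝ, HasDerivAt (bondiEnergy ℓ W)
        (-(pdTau W τ (-1)) ^ 2 - (pdTau W τ 1) ^ 2) τ)
      ∧ Antitone (bondiEnergy ℓ W) :=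
  energy_balance_general ℓ W hW hPDE
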